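/- Let d = 3 and define the local rule f : Fin 3 → Fin 3 → Fin 3 → Fin 3 by f x y z = y if x ∈ {0,1}, and, if x = 2, f 2 y z = σ y where σ 0 = 1, σ 1 = 0, σ 2 = 2 (the 3-state CA rule 222000111222111000222111000). Then for every n ≥ 3, the global map F of the n-cell periodic-boundary CA is bijective. -/

import Mathlib

/-!
The global map is its own inverse. The rule applies to a cell either the identity or the
involution `σ = ![1, 0, 2]`, according to whether its left neighbour lies in `{0, 1}`. Both maps
preserve `{0, 1}`, so after one step every left neighbour is still in `{0, 1}` exactly when it was
before, and the second step applies to each cell the same involution as the first.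
-/

def f16 : Fin 3 → Fin 3 → Fin 3 → Fin 3 :=
  fun x y _ => if x = 0 ∨ x = 1 then y else ![1, 0, 2] y

def globalMap {G α : Type*} [AddGroupWithOne G] (f : α → α → α → α) (c : G → α) (i : G) : α :=
  f (c (i - 1)) (c i) (c (i + 1))

theorem globalMap_involutive {G α : Type*} [AddGroupWithOne G] {f : α → α → α → α}
    (hf : ∀ a b c x y z, f (f a b x) (f b c y) z = c) :
    Function.Involutive (globalMap (G := G) f) :=
  fun _ => funext fun _ => hf _ _ _ _ _ _

theorem f16_f16 (a b c x y z : Fin 3) : f16 (f16 a b x) (f16 b c y) z = c := by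
  revert a b c x y z
  decide

theorem stmt_16_general (n : ℕ) :
    Function.Bijective
      (fun (c : ZMod n → Fin 3) (i : ZMod n) => f16 (c (i - 1)) (c i) (c (i + 1))) :=
  (globalMap_involutive f16_f16).bijective

theorem stmt_16 (n : ℕ) (hn : 3 ≤ n) :
    Function.Bijective
      (fun (c : ZMod n → Fin 3) (i : ZMod n) => f16 (c (i - 1)) (c i) (c (i + 1))) :=
  stmt_16_general n
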